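/- (Global convergence rate.) Let 𝒟 be a probability distribution over (x,y) ∈ ℝ^d × {0,1} with E[x_l²] ≤ B_X² for all coordinates l. Let S_1, …, S_D ⊆ {1,…,d} satisfy the M-coverage condition, and let p_1, …, p_D be produced by the sequential logit-passing protocol, each agent's minimizer assumed to exist. Let p* = σ∘z* be the globally optimal logistic predictor, where z*(x) = Σ_{l=1}^d α_l x_l minimizes expected BCE loss over all linear logits and ‖α‖₁ ≤ B_{p*}. Then the excess loss of the final agent satisfies L(p_D) − L(p*) ≤ B_{p*} · B_X · M/√D. -/

import Mathlib

open MeasureTheory ProbabilityTheory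

/-- The sigmoid (logistic) function `σ(z) = 1 / (1 + e^{-z})`. -/
noncomputable def sigmoid (z : ℝ) : ℝ := 1 / (1 + Real.exp (-z))

/-- The expected BCE loss `L(σ∘z) = E[log(1+e^{z(x)}) − y·z(x)]` of a logit function `z`. -/
noncomputable def bceLossFn {d : ℕ} (μ : Measure ((Fin d → ℝ) × ℝ))
    (z : (Fin d → ℝ) → ℝ) : ℝ :=
  ∫ q, (Real.log (1 + Real.exp (z q.1)) - q.2 * z q.1) ∂μ

/-- The logits of the sequential logit-passing protocol: `z_0 ≡ 0` and
`z_{i+1}(x) = w_iᵀ x + v_i z_i(x)`. -/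
noncomputable def seqLogit {d : ℕ} (w : ℕ → Fin d → ℝ) (v : ℕ → ℝ) :
    ℕ → (Fin d → ℝ) → ℝ
  | 0 => fun _ => 0
  | (i + 1) => fun x => (∑ l, w i l * x l) + v i * seqLogit w v i x


/-!
Every agent minimises the loss over a subspace containing the logit it receives, so the losses
decrease from `L(0) = log 2` and the drops `Δ_k` sum to at most `log 2`. The first-order conditions
say that the gradient at `z_{k+1}` is orthogonal to `z_k`, to `z_{k+1}` and to the coordinates in
`S_k`. Since the logistic loss is convex and `1/4`-smooth, this turns `Δ_k` into
`E[(σ(z_k) - σ(z_{k+1}))²] ≤ Δ_k / 2`, so by Cauchy–Schwarz each partial derivative moves by at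
most `B_X √(Δ_k / 2)` per step. In a block of `M` consecutive agents every coordinate is optimised
once, hence after the block every partial derivative is at most `B_X Σ_k √(Δ_k / 2)`, and
convexity bounds the excess loss by `‖α‖₁` times this. The block with the smallest total drop, at
most `2 M log 2 / D`, gives the rate `M / √D`.
-/

noncomputable def softplus (z : ℝ) : ℝ := Real.log (1 + Real.exp z)

lemma hasDerivAt_softplus (z : ℝ) : HasDerivAt softplus (Real.sigmoid z) z := by
  refine (((Real.hasDerivAt_exp z).const_add 1).log (by positivity)).congr_deriv ?_
  rw [Real.sigmoid_def, Real.exp_neg]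
  field_simp
  ring

lemma add_mul_sub_le_of_monotone_deriv {f f' : ℝ → ℝ} (hf : ∀ x, HasDerivAt f (f' x) x)
    (hf' : Monotone f') (a b : ℝ) : f a + f' a * (b - a) ≤ f b := by
  have hcont : Continuous f := continuous_iff_continuousAt.2 fun x => (hf x).continuousAt
  rcases lt_trichotomy a b with hab | rfl | hab
  · obtain ⟨c, hc, hslope⟩ :=
      exists_hasDerivAt_eq_slope f f' hab hcont.continuousOn fun x _ => hf x
    rw [eq_div_iff (sub_ne_zero.2 hab.ne')] at hslope
    nlinarith [hf' hc.1.le]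
  · simp
  · obtain ⟨c, hc, hslope⟩ :=
      exists_hasDerivAt_eq_slope f f' hab hcont.continuousOn fun x _ => hf x
    rw [eq_div_iff (sub_ne_zero.2 hab.ne')] at hslope
    nlinarith [hf' hc.2.le]

lemma softplus_add_mul_sub_le (a b : ℝ) :
    softplus a + Real.sigmoid a * (b - a) ≤ softplus b :=
  add_mul_sub_le_of_monotone_deriv hasDerivAt_softplus Real.sigmoid_monotone a b

-- `σ' = σ (1 - σ) ≤ 1/4`
lemma monotone_div_four_sub_sigmoid : Monotone fun t => t / 4 - Real.sigmoid t := by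
  refine monotone_of_hasDerivAt_nonneg
    (f' := fun t => 1 / 4 - Real.sigmoid t * (1 - Real.sigmoid t))
    (fun t => ((hasDerivAt_id t).div_const 4).sub (Real.hasDerivAt_sigmoid t) |>.congr_deriv ?_)
    fun t => ?_
  · ring
  · simp only [Pi.zero_apply]
    nlinarith [sq_nonneg (Real.sigmoid t - 1 / 2)]

lemma softplus_le_add_mul_sub_add_sq (a b : ℝ) :
    softplus b ≤ softplus a + Real.sigmoid a * (b - a) + (b - a) ^ 2 / 8 := by
  have := add_mul_sub_le_of_monotone_deriv (f := fun t => t ^ 2 / 8 - softplus t)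
    (fun t => (((hasDerivAt_pow 2 t).div_const 8).sub (hasDerivAt_softplus t)).congr_deriv
      (by ring)) monotone_div_four_sub_sigmoid a b
  linarith

-- Tangent bound at `b`, smoothness bound at `a`, both evaluated at `a - 4 (σ a - σ b)`.
lemma sq_sigmoid_sub_le (a b : ℝ) :
    (Real.sigmoid a - Real.sigmoid b) ^ 2
      ≤ (softplus a - softplus b - Real.sigmoid b * (a - b)) / 2 := by
  have h₁ := softplus_add_mul_sub_le b (a - 4 * (Real.sigmoid a - Real.sigmoid b))
  have h₂ := softplus_le_add_mul_sub_add_sq a (a - 4 * (Real.sigmoid a - Real.sigmoid b))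
  linarith

lemma softplus_nonneg (z : ℝ) : 0 ≤ softplus z :=
  Real.log_nonneg (by linarith [Real.exp_pos z])

lemma le_softplus (z : ℝ) : z ≤ softplus z := by
  conv_lhs => rw [← Real.log_exp z]
  exact Real.log_le_log (Real.exp_pos z) (by linarith)

lemma softplus_le_log_two_add_abs (z : ℝ) : softplus z ≤ Real.log 2 + |z| := by
  have htangent := softplus_add_mul_sub_le z 0
  have hzero : softplus 0 = Real.log 2 := by norm_num [softplus]
  have hσ : Real.sigmoid z * z ≤ |z| := by
    calc Real.sigmoid z * z ≤ |Real.sigmoid z * z| := le_abs_self _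
      _ ≤ |z| := by
        rw [abs_mul, abs_of_pos (Real.sigmoid_pos z)]
        exact mul_le_of_le_one_left (abs_nonneg z) (Real.sigmoid_le_one z)
  linarith

lemma abs_sigmoid_sub_le {y : ℝ} (hy : y = 0 ∨ y = 1) (z : ℝ) : |Real.sigmoid z - y| ≤ 1 := by
  rw [abs_le]
  rcases hy with rfl | rfl <;> constructor <;>
    linarith [Real.sigmoid_pos z, Real.sigmoid_le_one z]

-- The pointwise loss `l(z, y)` of the paper.
noncomputable def bce (z y : ℝ) : ℝ := softplus z - y * z

lemma bceLossFn_eq_integral_bce {d : ℕ} (μ : Measure ((Fin d → ℝ) × ℝ))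
    (z : (Fin d → ℝ) → ℝ) : bceLossFn μ z = ∫ q, bce (z q.1) q.2 ∂μ := rfl

lemma bce_nonneg {y : ℝ} (hy : y = 0 ∨ y = 1) (z : ℝ) : 0 ≤ bce z y := by
  rcases hy with rfl | rfl
  · simpa [bce] using softplus_nonneg z
  · simpa [bce] using le_softplus z

lemma abs_bce_le {y : ℝ} (hy : y = 0 ∨ y = 1) (z : ℝ) : |bce z y| ≤ Real.log 2 + 2 * |z| := by
  rw [abs_of_nonneg (bce_nonneg hy z), bce]
  have := softplus_le_log_two_add_abs z
  rcases hy with rfl | rfl <;> linarith [neg_abs_le z, abs_nonneg z]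

lemma sq_integral_mul_le {α : Type*} [MeasurableSpace α] {ν : Measure α} {f g : α → ℝ}
    (hf : Integrable (fun a => f a ^ 2) ν) (hg : Integrable (fun a => g a ^ 2) ν)
    (hfg : Integrable (fun a => f a * g a) ν) :
    (∫ a, f a * g a ∂ν) ^ 2 ≤ (∫ a, f a ^ 2 ∂ν) * ∫ a, g a ^ 2 ∂ν := by
  have hquad : ∀ t : ℝ,
      0 ≤ (∫ a, f a ^ 2 ∂ν) * (t * t) + 2 * (∫ a, f a * g a ∂ν) * t + ∫ a, g a ^ 2 ∂ν := by
    intro t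
    have hexpand : ∫ a, (t * f a + g a) ^ 2 ∂ν
        = (∫ a, f a ^ 2 ∂ν) * (t * t) + 2 * (∫ a, f a * g a ∂ν) * t + ∫ a, g a ^ 2 ∂ν := by
      have hpt : (fun a => (t * f a + g a) ^ 2)
          = fun a => (t * t) * f a ^ 2 + (2 * t) * (f a * g a) + g a ^ 2 := by
        funext a; ring
      have h₁ := hf.const_mul (t * t)
      have h₂ := hfg.const_mul (2 * t)
      have h₁₂ : Integrable (fun a => (t * t) * f a ^ 2 + (2 * t) * (f a * g a)) ν := h₁.add h₂
      rw [hpt, integral_add h₁₂ hg, integral_add h₁ h₂, integral_const_mul, integral_const_mul]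
      ring
    exact hexpand ▸ integral_nonneg fun a => sq_nonneg _
  have := discrim_le_zero hquad
  rw [discrim] at this
  nlinarith

section LinearLogits

variable {d : ℕ} {μ : Measure ((Fin d → ℝ) × ℝ)} (hy : ∀ᵐ q ∂μ, q.2 = 0 ∨ q.2 = 1)
  (hX : ∀ l, Integrable (fun q : (Fin d → ℝ) × ℝ => q.1 l ^ 2) μ)

variable (μ) in
noncomputable def bceGrad (c : Fin d → ℝ) : Fin d → ℝ :=
  fun l => ∫ q, (Real.sigmoid (c ⬝ᵥ q.1) - q.2) * q.1 l ∂μ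

include hX in
lemma memLp_two_coord (l : Fin d) : MemLp (fun q : (Fin d → ℝ) × ℝ => q.1 l) 2 μ :=
  (memLp_two_iff_integrable_sq (by fun_prop)).2 (hX l)

include hX in
lemma memLp_two_dotProduct (c : Fin d → ℝ) :
    MemLp (fun q : (Fin d → ℝ) × ℝ => c ⬝ᵥ q.1) 2 μ :=
  memLp_finsetSum _ fun l _ => (memLp_two_coord hX l).const_mul (c l)

include hy in
lemma integrable_residual_mul {f : (Fin d → ℝ) × ℝ → ℝ} (hf : Integrable f μ) (c : Fin d → ℝ) :
    Integrable (fun q => (Real.sigmoid (c ⬝ᵥ q.1) - q.2) * f q) μ := by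
  refine Integrable.mono' hf.norm
    ((Measurable.aestronglyMeasurable (by fun_prop)).mul hf.aestronglyMeasurable) ?_
  filter_upwards [hy] with q hq
  rw [norm_mul]
  exact mul_le_of_le_one_left (norm_nonneg _) (abs_sigmoid_sub_le hq _)

lemma integrable_sq_sigmoid_sub [IsFiniteMeasure μ] (a b : Fin d → ℝ) :
    Integrable (fun q : (Fin d → ℝ) × ℝ =>
      (Real.sigmoid (a ⬝ᵥ q.1) - Real.sigmoid (b ⬝ᵥ q.1)) ^ 2) μ := by
  refine Integrable.mono' (integrable_const 1) (Measurable.aestronglyMeasurable (by fun_prop))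
    (ae_of_all _ fun q => ?_)
  rw [Real.norm_eq_abs, abs_of_nonneg (sq_nonneg _)]
  nlinarith [Real.sigmoid_pos (a ⬝ᵥ q.1), Real.sigmoid_lt_one (a ⬝ᵥ q.1),
    Real.sigmoid_pos (b ⬝ᵥ q.1), Real.sigmoid_lt_one (b ⬝ᵥ q.1)]

variable [IsFiniteMeasure μ]

include hy hX

lemma integrable_bce (c : Fin d → ℝ) : Integrable (fun q => bce (c ⬝ᵥ q.1) q.2) μ := by
  refine Integrable.mono' ((integrable_const (Real.log 2)).add
    (((memLp_two_dotProduct hX c).integrable one_le_two).abs.const_mul 2))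
    (Measurable.aestronglyMeasurable (by unfold bce softplus; fun_prop)) ?_
  filter_upwards [hy] with q hq
  exact abs_bce_le hq _

lemma integral_residual_mul_dotProduct (c u : Fin d → ℝ) :
    ∫ q, (Real.sigmoid (c ⬝ᵥ q.1) - q.2) * (u ⬝ᵥ q.1) ∂μ = u ⬝ᵥ bceGrad μ c := by
  have hpt : ∀ q : (Fin d → ℝ) × ℝ, (Real.sigmoid (c ⬝ᵥ q.1) - q.2) * (u ⬝ᵥ q.1)
      = ∑ l, u l * ((Real.sigmoid (c ⬝ᵥ q.1) - q.2) * q.1 l) := fun q => by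
    rw [show u ⬝ᵥ q.1 = ∑ l, u l * q.1 l from rfl, Finset.mul_sum]
    exact Finset.sum_congr rfl fun l _ => by ring
  simp_rw [hpt]
  rw [integral_finsetSum _ fun l _ =>
    (integrable_residual_mul hy ((memLp_two_coord hX l).integrable one_le_two) c).const_mul _]
  exact Finset.sum_congr rfl fun l _ => integral_const_mul _ _

lemma bceLossFn_add_smul_le (c u : Fin d → ℝ) (η : ℝ) :
    bceLossFn μ ((c + η • u) ⬝ᵥ ·) ≤ bceLossFn μ (c ⬝ᵥ ·) + η * (u ⬝ᵥ bceGrad μ c)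
      + η ^ 2 / 8 * ∫ q, (u ⬝ᵥ q.1) ^ 2 ∂μ := by
  have hpt : ∀ q : (Fin d → ℝ) × ℝ, bce ((c + η • u) ⬝ᵥ q.1) q.2 ≤ bce (c ⬝ᵥ q.1) q.2
      + η * ((Real.sigmoid (c ⬝ᵥ q.1) - q.2) * (u ⬝ᵥ q.1)) + η ^ 2 / 8 * (u ⬝ᵥ q.1) ^ 2 := by
    intro q
    have := softplus_le_add_mul_sub_add_sq (c ⬝ᵥ q.1) (c ⬝ᵥ q.1 + η * (u ⬝ᵥ q.1))
    rw [add_dotProduct, smul_dotProduct, smul_eq_mul, bce, bce]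
    linarith
  have h₁ := integrable_bce hy hX c
  have h₂ := (integrable_residual_mul hy ((memLp_two_dotProduct hX u).integrable one_le_two)
    c).const_mul η
  have h₃ := (memLp_two_dotProduct hX u).integrable_sq.const_mul (η ^ 2 / 8)
  refine (integral_mono (integrable_bce hy hX _) ?_ hpt).trans_eq ?_
  · exact (h₁.add h₂).add h₃
  rw [integral_add ?_ h₃, integral_add h₁ h₂, integral_const_mul, integral_const_mul,
    integral_residual_mul_dotProduct hy hX]
  · rfl
  · exact h₁.add h₂

lemma bceLossFn_sub_le (a b : Fin d → ℝ) :
    bceLossFn μ (a ⬝ᵥ ·) - bceLossFn μ (b ⬝ᵥ ·) ≤ (a - b) ⬝ᵥ bceGrad μ a := by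
  have hpt : ∀ q : (Fin d → ℝ) × ℝ, bce (a ⬝ᵥ q.1) q.2 - bce (b ⬝ᵥ q.1) q.2
      ≤ (Real.sigmoid (a ⬝ᵥ q.1) - q.2) * ((a - b) ⬝ᵥ q.1) := by
    intro q
    have := softplus_add_mul_sub_le (a ⬝ᵥ q.1) (b ⬝ᵥ q.1)
    rw [sub_dotProduct, bce, bce]
    linarith
  have h₁ := integrable_bce hy hX a
  have h₂ := integrable_bce hy hX b
  rw [← integral_residual_mul_dotProduct hy hX, bceLossFn_eq_integral_bce,
    bceLossFn_eq_integral_bce, ← integral_sub h₁ h₂]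
  exact integral_mono (h₁.sub h₂)
    (integrable_residual_mul hy ((memLp_two_dotProduct hX _).integrable one_le_two) a) hpt

lemma integral_sq_sigmoid_sub_le (a b : Fin d → ℝ) :
    ∫ q, (Real.sigmoid (a ⬝ᵥ q.1) - Real.sigmoid (b ⬝ᵥ q.1)) ^ 2 ∂μ
      ≤ (bceLossFn μ (a ⬝ᵥ ·) - bceLossFn μ (b ⬝ᵥ ·) - (a - b) ⬝ᵥ bceGrad μ b) / 2 := by
  have hpt : ∀ q : (Fin d → ℝ) × ℝ, (Real.sigmoid (a ⬝ᵥ q.1) - Real.sigmoid (b ⬝ᵥ q.1)) ^ 2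
      ≤ (bce (a ⬝ᵥ q.1) q.2 - bce (b ⬝ᵥ q.1) q.2
          - (Real.sigmoid (b ⬝ᵥ q.1) - q.2) * ((a - b) ⬝ᵥ q.1)) / 2 := by
    intro q
    have := sq_sigmoid_sub_le (a ⬝ᵥ q.1) (b ⬝ᵥ q.1)
    rw [sub_dotProduct, bce, bce]
    linarith
  have h₁ := integrable_bce hy hX a
  have h₂ := integrable_bce hy hX b
  have h₃ := integrable_residual_mul hy
    ((memLp_two_dotProduct hX (a - b)).integrable one_le_two) b
  refine (integral_mono (integrable_sq_sigmoid_sub a b) ?_ hpt).trans_eq ?_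
  · exact ((h₁.sub h₂).sub h₃).div_const 2
  rw [integral_div, integral_sub ?_ h₃, integral_sub h₁ h₂,
    integral_residual_mul_dotProduct hy hX]
  · rfl
  · exact h₁.sub h₂

lemma dotProduct_bceGrad_eq_zero_of_forall_le {c u : Fin d → ℝ}
    (hmin : ∀ η : ℝ, bceLossFn μ (c ⬝ᵥ ·) ≤ bceLossFn μ ((c + η • u) ⬝ᵥ ·)) :
    u ⬝ᵥ bceGrad μ c = 0 := by
  have hquad : ∀ η : ℝ, 0 ≤ ((∫ q, (u ⬝ᵥ q.1) ^ 2 ∂μ) / 8) * (η * η)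
      + (u ⬝ᵥ bceGrad μ c) * η + 0 := fun η => by
    nlinarith [hmin η, bceLossFn_add_smul_le hy hX c u η]
  have := discrim_le_zero hquad
  rw [discrim] at this
  nlinarith [sq_nonneg (u ⬝ᵥ bceGrad μ c)]

lemma sq_bceGrad_sub_le (a b : Fin d → ℝ) (l : Fin d) :
    (bceGrad μ a l - bceGrad μ b l) ^ 2
      ≤ (∫ q, (Real.sigmoid (a ⬝ᵥ q.1) - Real.sigmoid (b ⬝ᵥ q.1)) ^ 2 ∂μ)
        * ∫ q, q.1 l ^ 2 ∂μ := by
  have hl := (memLp_two_coord hX l).integrable one_le_two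
  have hdiff : bceGrad μ a l - bceGrad μ b l
      = ∫ q, (Real.sigmoid (a ⬝ᵥ q.1) - Real.sigmoid (b ⬝ᵥ q.1)) * q.1 l ∂μ := by
    rw [bceGrad, bceGrad, ← integral_sub (integrable_residual_mul hy hl a)
      (integrable_residual_mul hy hl b)]
    congr 1 with q
    ring
  rw [hdiff]
  refine sq_integral_mul_le (integrable_sq_sigmoid_sub a b) (hX l) ?_
  refine ((integrable_residual_mul hy hl a).sub (integrable_residual_mul hy hl b)).congr
    (ae_of_all _ fun q => ?_)
  simp only [Pi.sub_apply]
  ring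

end LinearLogits

lemma sum_range_mul_eq_sum_blocks (a : ℕ → ℝ) (K M : ℕ) :
    ∑ k ∈ Finset.range (K * M), a k
      = ∑ t ∈ Finset.range K, ∑ k ∈ Finset.Ico (t * M) (t * M + M), a k := by
  induction K with
  | zero => simp
  | succ K ih =>
    rw [Finset.sum_range_succ, ← ih, Finset.sum_range_add_sum_Ico _ (by nlinarith), add_one_mul]

-- Pigeonhole over the `D / M ≥ D / (2 M)` disjoint blocks `[t M, t M + M)`.
lemma exists_sum_Ico_le {D M : ℕ} (a : ℕ → ℝ) (ha : ∀ k < D, 0 ≤ a k) (hM : 0 < M)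
    (hMD : M ≤ D) :
    ∃ i, i + M ≤ D ∧ ∑ k ∈ Finset.Ico i (i + M), a k ≤ 2 * M / D * ∑ k ∈ Finset.range D, a k := by
  set K := D / M
  have hK : 0 < K := Nat.div_pos hMD hM
  have hKM : K * M ≤ D := Nat.div_mul_le_self D M
  have hD : D ≤ 2 * K * M := by
    have : D < K * M + M := Nat.lt_div_mul_add hM
    nlinarith
  have hblocks : ∑ t ∈ Finset.range K, ∑ k ∈ Finset.Ico (t * M) (t * M + M), a k
      ≤ ∑ t ∈ Finset.range K, (∑ k ∈ Finset.range D, a k) / K := by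
    rw [← sum_range_mul_eq_sum_blocks, Finset.sum_const, Finset.card_range, nsmul_eq_mul,
      mul_div_cancel₀ _ (by positivity)]
    exact Finset.sum_le_sum_of_subset_of_nonneg (Finset.range_subset_range.2 hKM)
      fun k hk _ => ha k (Finset.mem_range.1 hk)
  obtain ⟨t, ht, hle⟩ := Finset.exists_le_of_sum_le (Finset.nonempty_range_iff.2 hK.ne') hblocks
  have htK : t * M + M ≤ D := by
    have := Finset.mem_range.1 ht
    nlinarith
  refine ⟨t * M, htK, hle.trans ?_⟩
  have hsum : 0 ≤ ∑ k ∈ Finset.range D, a k :=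
    Finset.sum_nonneg fun k hk => ha k (Finset.mem_range.1 hk)
  have hD' : (D : ℝ) ≤ 2 * K * M := by exact_mod_cast hD
  rw [div_le_iff₀ (by positivity), mul_comm, ← mul_assoc]
  refine le_mul_of_one_le_left hsum ?_
  rw [← mul_div_assoc, one_le_div (by exact_mod_cast hM.trans_le hMD)]
  linarith

lemma sum_sqrt_le_sqrt_card_mul_sum {ι : Type*} (s : Finset ι) {a : ι → ℝ}
    (ha : ∀ i ∈ s, 0 ≤ a i) : ∑ i ∈ s, √(a i) ≤ √(s.card * ∑ i ∈ s, a i) := by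
  have h := Real.sum_mul_le_sqrt_mul_sqrt s (fun _ => 1) fun i => √(a i)
  simp only [one_mul, one_pow, Finset.sum_const, nsmul_eq_mul, mul_one] at h
  rwa [Finset.sum_congr rfl fun i hi => Real.sq_sqrt (ha i hi),
    ← Real.sqrt_mul (by positivity)] at h

section Protocol

variable {d : ℕ}

-- The logits `w ⬝ᵥ x + v (z ⬝ᵥ x)` with `w` supported on `S`, among which an agent with features
-- `S` receiving the logit `z ⬝ᵥ x` chooses.
def agentSubspace (S : Finset (Fin d)) (z : Fin d → ℝ) : Submodule ℝ (Fin d → ℝ) :=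
  Submodule.pi (↑S)ᶜ (fun _ => ⊥) ⊔ ℝ ∙ z

-- `Z i` are the coefficients of the logit `z_i` passed on by agent `i`, for `i ≤ D`.
structure IsLogitPassing (μ : Measure ((Fin d → ℝ) × ℝ)) (S : ℕ → Finset (Fin d)) (D : ℕ)
    (Z : ℕ → Fin d → ℝ) : Prop where
  zero : Z 0 = 0
  mem : ∀ i < D, Z (i + 1) ∈ agentSubspace (S i) (Z i)
  isMinOn : ∀ i < D,
    IsMinOn (fun c => bceLossFn μ (c ⬝ᵥ ·)) (agentSubspace (S i) (Z i)) (Z (i + 1))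

noncomputable def lossDrop (μ : Measure ((Fin d → ℝ) × ℝ)) (Z : ℕ → Fin d → ℝ) (k : ℕ) : ℝ :=
  bceLossFn μ (Z k ⬝ᵥ ·) - bceLossFn μ (Z (k + 1) ⬝ᵥ ·)

lemma mem_agentSubspace_self (S : Finset (Fin d)) (z : Fin d → ℝ) : z ∈ agentSubspace S z :=
  Submodule.mem_sup_right (Submodule.mem_span_singleton_self z)

lemma single_mem_agentSubspace {S : Finset (Fin d)} {l : Fin d} (hl : l ∈ S) (z : Fin d → ℝ) :
    Pi.single l 1 ∈ agentSubspace S z :=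
  Submodule.mem_sup_left fun i hi =>
    (Submodule.mem_bot ℝ).2 (Pi.single_eq_of_ne (by rintro rfl; exact hi hl) 1)

namespace IsLogitPassing

variable {μ : Measure ((Fin d → ℝ) × ℝ)} {S : ℕ → Finset (Fin d)} {D : ℕ} {Z : ℕ → Fin d → ℝ}
  (hZ : IsLogitPassing μ S D Z) (hy : ∀ᵐ q ∂μ, q.2 = 0 ∨ q.2 = 1)
  (hX : ∀ l, Integrable (fun q : (Fin d → ℝ) × ℝ => q.1 l ^ 2) μ)

include hZ

lemma bceLossFn_succ_le {k : ℕ} (hk : k < D) :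
    bceLossFn μ (Z (k + 1) ⬝ᵥ ·) ≤ bceLossFn μ (Z k ⬝ᵥ ·) :=
  isMinOn_iff.1 (hZ.isMinOn k hk) _ (mem_agentSubspace_self _ _)

lemma lossDrop_nonneg {k : ℕ} (hk : k < D) : 0 ≤ lossDrop μ Z k :=
  sub_nonneg.2 (hZ.bceLossFn_succ_le hk)

lemma bceLossFn_le_of_le {m n : ℕ} (hmn : m ≤ n) (hn : n ≤ D) :
    bceLossFn μ (Z n ⬝ᵥ ·) ≤ bceLossFn μ (Z m ⬝ᵥ ·) := by
  induction n, hmn using Nat.le_induction with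
  | base => exact le_rfl
  | succ n _ ih => exact (hZ.bceLossFn_succ_le hn).trans (ih (by omega))

include hy in
lemma sum_lossDrop_le [IsProbabilityMeasure μ] :
    ∑ k ∈ Finset.range D, lossDrop μ Z k ≤ Real.log 2 := by
  have hzero : bceLossFn μ (Z 0 ⬝ᵥ ·) = Real.log 2 := by
    simp [hZ.zero, bceLossFn_eq_integral_bce, bce, softplus, one_add_one_eq_two]
  have hD : 0 ≤ bceLossFn μ (Z D ⬝ᵥ ·) :=
    integral_nonneg_of_ae (hy.mono fun q hq => bce_nonneg hq _)
  unfold lossDrop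
  rw [Finset.sum_range_sub' (fun k => bceLossFn μ (Z k ⬝ᵥ ·))]
  linarith

include hy in
lemma exists_sum_sqrt_lossDrop_le [IsProbabilityMeasure μ] {M : ℕ} (hM : 1 ≤ M) (hMD : M ≤ D) :
    ∃ i, i + M ≤ D ∧ ∑ k ∈ Finset.Ico i (i + M), √(lossDrop μ Z k / 2) ≤ M / √D := by
  have hhalf : ∀ k < D, 0 ≤ lossDrop μ Z k / 2 := fun k hk => by
    have := hZ.lossDrop_nonneg hk
    positivity
  obtain ⟨i, hiM, hblock⟩ := exists_sum_Ico_le _ hhalf hM hMD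
  refine ⟨i, hiM, (sum_sqrt_le_sqrt_card_mul_sum _ fun k hk => hhalf k ?_).trans ?_⟩
  · rw [Finset.mem_Ico] at hk
    omega
  have hD : (0 : ℝ) < D := by exact_mod_cast hM.trans hMD
  have htotal : ∑ k ∈ Finset.range D, lossDrop μ Z k / 2 ≤ 1 / 2 := by
    rw [← Finset.sum_div]
    linarith [hZ.sum_lossDrop_le hy, Real.log_two_lt_d9]
  have hblock' : ∑ k ∈ Finset.Ico i (i + M), lossDrop μ Z k / 2 ≤ M / D := by
    refine hblock.trans ((mul_le_mul_of_nonneg_left htotal (by positivity)).trans_eq ?_)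
    ring
  rw [Nat.card_Ico, Nat.add_sub_cancel_left]
  calc √(M * ∑ k ∈ Finset.Ico i (i + M), lossDrop μ Z k / 2) ≤ √((M : ℝ) ^ 2 / D) :=
        Real.sqrt_le_sqrt ((mul_le_mul_of_nonneg_left hblock' (Nat.cast_nonneg M)).trans_eq
          (by ring))
    _ = M / √D := by rw [Real.sqrt_div' _ hD.le, Real.sqrt_sq (Nat.cast_nonneg M)]

variable [IsFiniteMeasure μ]

include hy hX

lemma dotProduct_bceGrad_succ_eq_zero {k : ℕ} (hk : k < D) {u : Fin d → ℝ}
    (hu : u ∈ agentSubspace (S k) (Z k)) : u ⬝ᵥ bceGrad μ (Z (k + 1)) = 0 :=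
  dotProduct_bceGrad_eq_zero_of_forall_le hy hX fun η => isMinOn_iff.1 (hZ.isMinOn k hk) _
    (Submodule.add_mem _ (hZ.mem k hk) (Submodule.smul_mem _ η hu))

lemma bceGrad_succ_eq_zero {k : ℕ} (hk : k < D) {l : Fin d} (hl : l ∈ S k) :
    bceGrad μ (Z (k + 1)) l = 0 := by
  simpa [single_dotProduct] using
    hZ.dotProduct_bceGrad_succ_eq_zero hy hX hk (single_mem_agentSubspace hl (Z k))

lemma dotProduct_bceGrad_self {k : ℕ} (hk : k ≤ D) : Z k ⬝ᵥ bceGrad μ (Z k) = 0 := by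
  cases k with
  | zero => simp [hZ.zero]
  | succ k => exact hZ.dotProduct_bceGrad_succ_eq_zero hy hX hk (hZ.mem k hk)

lemma integral_sq_sigmoid_sub_succ_le {k : ℕ} (hk : k < D) :
    ∫ q, (Real.sigmoid (Z k ⬝ᵥ q.1) - Real.sigmoid (Z (k + 1) ⬝ᵥ q.1)) ^ 2 ∂μ
      ≤ lossDrop μ Z k / 2 := by
  have hprev := hZ.dotProduct_bceGrad_succ_eq_zero hy hX hk (mem_agentSubspace_self _ _)
  have hself := hZ.dotProduct_bceGrad_self hy hX hk
  have := integral_sq_sigmoid_sub_le hy hX (Z k) (Z (k + 1))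
  rwa [sub_dotProduct, hprev, hself, sub_zero, sub_zero] at this

lemma abs_bceGrad_succ_sub_le {BX : ℝ} (hBX : 0 ≤ BX) {l : Fin d}
    (hXl : ∫ q, q.1 l ^ 2 ∂μ ≤ BX ^ 2) {k : ℕ} (hk : k < D) :
    |bceGrad μ (Z (k + 1)) l - bceGrad μ (Z k) l| ≤ BX * √(lossDrop μ Z k / 2) := by
  have hsq : (bceGrad μ (Z k) l - bceGrad μ (Z (k + 1)) l) ^ 2
      ≤ lossDrop μ Z k / 2 * BX ^ 2 :=
    (sq_bceGrad_sub_le hy hX _ _ l).trans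
      (mul_le_mul (hZ.integral_sq_sigmoid_sub_succ_le hy hX hk) hXl
        (integral_nonneg fun _ => sq_nonneg _) (by linarith [hZ.lossDrop_nonneg hk]))
  rw [abs_sub_comm, mul_comm, ← Real.sqrt_sq hBX, ← Real.sqrt_mul' _ (sq_nonneg _)]
  exact Real.abs_le_sqrt hsq

-- The partial derivative `l` vanishes after the agent of the block that owns feature `l`.
lemma abs_bceGrad_le_of_exists_mem {BX : ℝ} (hBX : 0 ≤ BX) {l : Fin d}
    (hXl : ∫ q, q.1 l ^ 2 ∂μ ≤ BX ^ 2) {i M : ℕ} (hiM : i + M ≤ D)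
    (hl : ∃ j < M, l ∈ S (i + j)) :
    |bceGrad μ (Z (i + M)) l| ≤ BX * ∑ k ∈ Finset.Ico i (i + M), √(lossDrop μ Z k / 2) := by
  obtain ⟨j, hj, hlj⟩ := hl
  have hzero := hZ.bceGrad_succ_eq_zero hy hX (by omega : i + j < D) hlj
  calc |bceGrad μ (Z (i + M)) l|
      = dist (bceGrad μ (Z (i + j + 1)) l) (bceGrad μ (Z (i + M)) l) := by
        rw [hzero, Real.dist_eq, zero_sub, abs_neg]
    _ ≤ ∑ k ∈ Finset.Ico (i + j + 1) (i + M),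
          dist (bceGrad μ (Z k) l) (bceGrad μ (Z (k + 1)) l) :=
        dist_le_Ico_sum_dist (fun k => bceGrad μ (Z k) l) (by omega)
    _ ≤ ∑ k ∈ Finset.Ico i (i + M), BX * √(lossDrop μ Z k / 2) := by
        refine Finset.sum_le_sum_of_subset_of_nonneg (Finset.Ico_subset_Ico (by omega) le_rfl)
          (fun k hk _ => ?_) |>.trans' (Finset.sum_le_sum fun k hk => ?_)
        · positivity
        · rw [Finset.mem_Ico] at hk
          rw [dist_comm, Real.dist_eq]
          exact hZ.abs_bceGrad_succ_sub_le hy hX hBX hXl (by omega)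
    _ = BX * ∑ k ∈ Finset.Ico i (i + M), √(lossDrop μ Z k / 2) := by rw [Finset.mul_sum]

lemma sub_le_of_cover {BX : ℝ} (hBX : 0 ≤ BX) (hX2 : ∀ l, ∫ q, q.1 l ^ 2 ∂μ ≤ BX ^ 2)
    {i M : ℕ} (hiM : i + M ≤ D) (hcov : ∀ l, ∃ j < M, l ∈ S (i + j)) (α : Fin d → ℝ) :
    bceLossFn μ (Z D ⬝ᵥ ·) - bceLossFn μ (α ⬝ᵥ ·)
      ≤ (∑ l, |α l|) * BX * ∑ k ∈ Finset.Ico i (i + M), √(lossDrop μ Z k / 2) := by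
  set g := bceGrad μ (Z (i + M))
  have hconvex : bceLossFn μ (Z (i + M) ⬝ᵥ ·) - bceLossFn μ (α ⬝ᵥ ·) ≤ -(α ⬝ᵥ g) := by
    have := bceLossFn_sub_le hy hX (Z (i + M)) α
    rwa [sub_dotProduct, hZ.dotProduct_bceGrad_self hy hX hiM, zero_sub] at this
  have hdual : -(α ⬝ᵥ g) ≤ ∑ l, |α l| * |g l| := by
    refine (neg_le_abs _).trans ((Finset.abs_sum_le_sum_abs _ _).trans_eq ?_)
    simp only [abs_mul]
  calc bceLossFn μ (Z D ⬝ᵥ ·) - bceLossFn μ (α ⬝ᵥ ·)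
      ≤ ∑ l, |α l| * |g l| := by linarith [hZ.bceLossFn_le_of_le hiM le_rfl]
    _ ≤ ∑ l, |α l| * (BX * ∑ k ∈ Finset.Ico i (i + M), √(lossDrop μ Z k / 2)) :=
        Finset.sum_le_sum fun l _ => mul_le_mul_of_nonneg_left
          (hZ.abs_bceGrad_le_of_exists_mem hy hX hBX (hX2 l) hiM (hcov l)) (abs_nonneg _)
    _ = _ := by rw [← Finset.sum_mul, mul_assoc]

end IsLogitPassing

end Protocol

noncomputable def seqCoeff {d : ℕ} (w : ℕ → Fin d → ℝ) (v : ℕ → ℝ) : ℕ → Fin d → ℝ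
  | 0 => 0
  | i + 1 => w i + v i • seqCoeff w v i

lemma seqLogit_eq_dotProduct {d : ℕ} (w : ℕ → Fin d → ℝ) (v : ℕ → ℝ) (k : ℕ) :
    seqLogit w v k = (seqCoeff w v k ⬝ᵥ ·) := by
  induction k with
  | zero => funext x; simp [seqLogit, seqCoeff]
  | succ k ih =>
    funext x
    simp only [seqLogit, seqCoeff, ih, add_dotProduct, smul_dotProduct, smul_eq_mul]
    rfl

lemma isLogitPassing_seqCoeff {d : ℕ} {μ : Measure ((Fin d → ℝ) × ℝ)} {D : ℕ}
    {S : ℕ → Finset (Fin d)} {w : ℕ → Fin d → ℝ} {v : ℕ → ℝ}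
    (hsupp : ∀ i < D, ∀ l ∉ S i, w i l = 0)
    (hmin : ∀ i < D, ∀ w' : Fin d → ℝ, (∀ l ∉ S i, w' l = 0) → ∀ v' : ℝ,
      bceLossFn μ (seqLogit w v (i + 1))
        ≤ bceLossFn μ (fun x => (∑ l, w' l * x l) + v' * seqLogit w v i x)) :
    IsLogitPassing μ S D (seqCoeff w v) where
  zero := rfl
  mem i hi := Submodule.add_mem_sup (fun l hl => (Submodule.mem_bot ℝ).2 (hsupp i hi l hl))
    (Submodule.smul_mem _ _ (Submodule.mem_span_singleton_self _))
  isMinOn i hi := isMinOn_iff.2 fun u hu => by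
    obtain ⟨w', hw', t, ht, rfl⟩ := Submodule.mem_sup.1 hu
    obtain ⟨v', rfl⟩ := Submodule.mem_span_singleton.1 ht
    have := hmin i hi w' (fun l hl => (Submodule.mem_bot ℝ).1 (hw' l hl)) v'
    simp only [seqLogit_eq_dotProduct] at this
    refine this.trans_eq (congrArg (bceLossFn μ) (funext fun x => ?_))
    rw [add_dotProduct, smul_dotProduct, smul_eq_mul]
    rfl

theorem global_convergence_rate_general
    {d : ℕ} (μ : Measure ((Fin d → ℝ) × ℝ)) [IsProbabilityMeasure μ]
    (hy : ∀ᵐ q ∂μ, q.2 = 0 ∨ q.2 = 1)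
    (BX : ℝ) (hBX : 0 ≤ BX)
    (hX2int : ∀ l : Fin d, Integrable (fun q : (Fin d → ℝ) × ℝ => (q.1 l) ^ 2) μ)
    (hX2 : ∀ l : Fin d, ∫ q, (q.1 l) ^ 2 ∂μ ≤ BX ^ 2)
    (D M : ℕ) (hM : 1 ≤ M) (hMD : M ≤ D)
    (S : ℕ → Finset (Fin d))
    (hcov : ∀ i : ℕ, i + M ≤ D → ∀ l : Fin d, ∃ j < M, l ∈ S (i + j))
    (w : ℕ → Fin d → ℝ) (v : ℕ → ℝ)
    (hsupp : ∀ i < D, ∀ l ∉ S i, w i l = 0)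
    (hmin : ∀ i < D, ∀ w' : Fin d → ℝ, (∀ l ∉ S i, w' l = 0) → ∀ v' : ℝ,
      bceLossFn μ (seqLogit w v (i + 1))
        ≤ bceLossFn μ (fun x => (∑ l, w' l * x l) + v' * seqLogit w v i x))
    (Bp : ℝ) (α : Fin d → ℝ)
    (hα1 : ∑ l, |α l| ≤ Bp) :
    bceLossFn μ (seqLogit w v D) - bceLossFn μ (fun x => ∑ l, α l * x l)
      ≤ Bp * BX * M / Real.sqrt D := by
  have hZ := isLogitPassing_seqCoeff (μ := μ) hsupp hmin
  obtain ⟨i, hiM, hblock⟩ := hZ.exists_sum_sqrt_lossDrop_le hy hM hMD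
  have hBp : 0 ≤ Bp := (Finset.sum_nonneg fun l _ => abs_nonneg (α l)).trans hα1
  rw [seqLogit_eq_dotProduct, mul_div_assoc]
  calc _ ≤ (∑ l, |α l|) * BX * ∑ k ∈ Finset.Ico i (i + M), √(lossDrop μ (seqCoeff w v) k / 2) :=
        hZ.sub_le_of_cover hy hX2int hBX hX2 hiM (hcov i hiM) α
    _ ≤ Bp * BX * (M / √D) := by gcongr

/-- Global convergence rate: for the sequential logit-passing protocol on feature subsets
`S_1, …, S_D` satisfying the `M`-coverage condition (every `M` contiguous subsets cover all
`d` features), with second moments `E[x_l²] ≤ B_X²` and a globally optimal linear logit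
`z*(x) = Σ_l α_l x_l` with `‖α‖₁ ≤ B_{p*}`, the excess loss of the final agent satisfies
`L(p_D) − L(p*) ≤ B_{p*} B_X M / √D`. -/
theorem global_convergence_rate
    {d : ℕ} (μ : Measure ((Fin d → ℝ) × ℝ)) [IsProbabilityMeasure μ]
    (hy : ∀ᵐ q ∂μ, q.2 = 0 ∨ q.2 = 1)
    (BX : ℝ) (hBX : 0 ≤ BX)
    (hX2int : ∀ l : Fin d, Integrable (fun q : (Fin d → ℝ) × ℝ => (q.1 l) ^ 2) μ)
    (hX2 : ∀ l : Fin d, ∫ q, (q.1 l) ^ 2 ∂μ ≤ BX ^ 2)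
    (D M : ℕ) (hM : 1 ≤ M) (hMD : M ≤ D)
    (S : ℕ → Finset (Fin d))
    (hcov : ∀ i : ℕ, i + M ≤ D → ∀ l : Fin d, ∃ j < M, l ∈ S (i + j))
    (w : ℕ → Fin d → ℝ) (v : ℕ → ℝ)
    (hsupp : ∀ i < D, ∀ l ∉ S i, w i l = 0)
    (hmin : ∀ i < D, ∀ w' : Fin d → ℝ, (∀ l ∉ S i, w' l = 0) → ∀ v' : ℝ,
      bceLossFn μ (seqLogit w v (i + 1))
        ≤ bceLossFn μ (fun x => (∑ l, w' l * x l) + v' * seqLogit w v i x))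
    (Bp : ℝ) (α : Fin d → ℝ)
    (hαopt : ∀ θ : Fin d → ℝ,
      bceLossFn μ (fun x => ∑ l, α l * x l) ≤ bceLossFn μ (fun x => ∑ l, θ l * x l))
    (hα1 : ∑ l, |α l| ≤ Bp) :
    bceLossFn μ (seqLogit w v D) - bceLossFn μ (fun x => ∑ l, α l * x l)
      ≤ Bp * BX * M / Real.sqrt D :=
  global_convergence_rate_general μ hy BX hBX hX2int hX2 D M hM hMD S hcov w v hsupp hmin Bp α hα1
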